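/- Let α, c, σ > 0, set K = 2α³/(cσ²), and let r̂ ∈ (1/2, 1) be the unique solution of l(r̂) = K. For ε ∈ (0,1), let r̄(ε) ∈ (0,1) be the unique solution of l(r̄(ε)) + l((1+ε)/2) = 2K. If (1+ε)/2 < r̂, then 1/(r̄(ε)(1−r̄(ε))) − 4/((1+ε)(1−ε)) > 0; and if (1+ε)/2 = r̂, then r̄(ε) = r̂ = (1+ε)/2 and 1/(r̄(ε)(1−r̄(ε))) − 4/((1+ε)(1−ε)) = 0. (Hence the option value of learning v₀ − 1/2 = (cσ²/(4α²))·[1/(r̄(1−r̄)) − 4/((1+ε)(1−ε))] is strictly positive for ε < 2r̂ − 1 and vanishes continuously at ε = 2r̂ − 1.) -/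

import Mathlib

/-
Each of the three summands of `l` is strictly increasing on `(0, 1)`, so `l` is injective there.
If `(1 + ε)/2 < r̂` then `l((1 + ε)/2) < l(r̂) = K`, hence `l(r̄) = 2K − l((1 + ε)/2) > K = l(r̂)`
and `r̄ > r̂ > (1 + ε)/2`. Since `4/((1 + ε)(1 − ε)) = 1/(s(1 − s))` for `s = (1 + ε)/2`, the claim
follows from `t ↦ 1/(t(1 − t))` being strictly increasing on `[1/2, 1)`. At `(1 + ε)/2 = r̂` the
defining equation reads `l(r̄) = K = l(r̂)`, and injectivity gives `r̄ = r̂`.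
-/

/-- `l(r) = 2·log(r/(1−r)) − 1/r + 1/(1−r)`. -/
noncomputable def l (r : ℝ) : ℝ := 2 * Real.log (r / (1 - r)) - 1 / r + 1 / (1 - r)

open Set

lemma l_strictMonoOn : StrictMonoOn l (Ioo 0 1) := by
  rintro a ⟨ha0, ha1⟩ b ⟨-, hb1⟩ hab
  have hlog : Real.log (a / (1 - a)) < Real.log (b / (1 - b)) := by
    apply Real.log_lt_log (div_pos ha0 (sub_pos.2 ha1))
    rw [div_lt_div_iff₀ (sub_pos.2 ha1) (sub_pos.2 hb1)]
    nlinarith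
  have hinv : 1 / b < 1 / a := one_div_lt_one_div_of_lt ha0 hab
  have hinv_sub : 1 / (1 - a) < 1 / (1 - b) :=
    one_div_lt_one_div_of_lt (sub_pos.2 hb1) (by linarith)
  unfold l
  linarith

lemma strictMonoOn_one_div_mul_one_sub :
    StrictMonoOn (fun t : ℝ ↦ 1 / (t * (1 - t))) (Ico (1 / 2) 1) := by
  rintro a ⟨ha0, -⟩ b ⟨-, hb1⟩ hab
  apply one_div_lt_one_div_of_lt (mul_pos (by linarith) (by linarith))
  nlinarith

theorem stmt_16_general (α c σ rhat : ℝ) (rbar : ℝ → ℝ)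
    (hrhat : rhat ∈ Set.Ioo (1 / 2 : ℝ) 1)
    (hrhat_eq : l rhat = 2 * α ^ 3 / (c * σ ^ 2))
    (hrbar : ∀ ε ∈ Set.Ioo (0 : ℝ) 1,
      rbar ε ∈ Set.Ioo (0 : ℝ) 1 ∧
      l (rbar ε) + l ((1 + ε) / 2) = 2 * (2 * α ^ 3 / (c * σ ^ 2))) :
    ∀ ε ∈ Set.Ioo (0 : ℝ) 1,
      ((1 + ε) / 2 < rhat →
        0 < 1 / (rbar ε * (1 - rbar ε)) - 4 / ((1 + ε) * (1 - ε))) ∧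
      ((1 + ε) / 2 = rhat →
        rbar ε = rhat ∧ rhat = (1 + ε) / 2 ∧
        1 / (rbar ε * (1 - rbar ε)) - 4 / ((1 + ε) * (1 - ε)) = 0) := by
  rintro ε ⟨hε0, hε1⟩
  obtain ⟨hrbar_mem, hrbar_eq⟩ := hrbar ε ⟨hε0, hε1⟩
  have hrhat_mem : rhat ∈ Ioo (0 : ℝ) 1 := ⟨by linarith [hrhat.1], hrhat.2⟩
  have hs_mem : (1 + ε) / 2 ∈ Ioo (0 : ℝ) 1 := ⟨by linarith, by linarith⟩
  have hgap : 4 / ((1 + ε) * (1 - ε)) = 1 / ((1 + ε) / 2 * (1 - (1 + ε) / 2)) := by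
    rw [show (1 + ε) / 2 * (1 - (1 + ε) / 2) = (1 + ε) * (1 - ε) / 4 by ring, one_div_div]
  rw [hgap]
  constructor
  · intro hlt
    have hl_lt : l ((1 + ε) / 2) < l rhat := l_strictMonoOn hs_mem hrhat_mem hlt
    have hrhat_lt : rhat < rbar ε :=
      (l_strictMonoOn.lt_iff_lt hrhat_mem hrbar_mem).1 (by linarith)
    exact sub_pos.2 <| strictMonoOn_one_div_mul_one_sub ⟨by linarith, by linarith⟩
      ⟨by linarith [hrhat.1], hrbar_mem.2⟩ (hlt.trans hrhat_lt)
  · intro heq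
    have hrbar_eq_rhat : rbar ε = rhat :=
      l_strictMonoOn.injOn hrbar_mem hrhat_mem (by rw [heq] at hrbar_eq; linarith)
    exact ⟨hrbar_eq_rhat, heq.symm, by rw [hrbar_eq_rhat, heq, sub_self]⟩

theorem stmt_16 (α c σ rhat : ℝ) (rbar : ℝ → ℝ)
    (hα : 0 < α) (hc : 0 < c) (hσ : 0 < σ)
    (hrhat : rhat ∈ Set.Ioo (1 / 2 : ℝ) 1)
    (hrhat_eq : l rhat = 2 * α ^ 3 / (c * σ ^ 2))
    (hrbar : ∀ ε ∈ Set.Ioo (0 : ℝ) 1,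
      rbar ε ∈ Set.Ioo (0 : ℝ) 1 ∧
      l (rbar ε) + l ((1 + ε) / 2) = 2 * (2 * α ^ 3 / (c * σ ^ 2))) :
    ∀ ε ∈ Set.Ioo (0 : ℝ) 1,
      ((1 + ε) / 2 < rhat →
        0 < 1 / (rbar ε * (1 - rbar ε)) - 4 / ((1 + ε) * (1 - ε))) ∧
      ((1 + ε) / 2 = rhat →
        rbar ε = rhat ∧ rhat = (1 + ε) / 2 ∧
        1 / (rbar ε * (1 - rbar ε)) - 4 / ((1 + ε) * (1 - ε)) = 0) :=
  stmt_16_general α c σ rhat rbar hrhat hrhat_eq hrbar
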